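/- (Asymptotics of g'' at infinity) Let g : (0, ∞) → ℝ be defined by g(ξ) = √(ξ tanh ξ). Then g is twice differentiable on (0, ∞) and ξ^{3/2} g''(ξ) tends to −1/4 as ξ → +∞; in particular |g''(ξ)| is asymptotically equivalent to (1/4)·ξ^{−3/2} as ξ → +∞. -/

import Mathlib

/-!
Write `g = √u` with `u ξ = ξ tanh ξ`, so that `g'' = u'' / (2√u) - u'² / (4 u √u)` with
`u' = tanh ξ + ξ / cosh² ξ` and `u'' = 2 (1 - ξ tanh ξ) / cosh² ξ`. Since `1 / cosh² ξ` decays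
like `e^{-2ξ}`, we get `u' → 1` and `ξ u'' → 0`, so
`ξ^{3/2} g'' = ξ u'' / (2 √(tanh ξ)) - u'² / (4 tanh ξ √(tanh ξ))` tends to `0 - 1/4`.
-/

open Real Filter

/-- The function `g(ξ) = √(ξ tanh ξ)`. -/
noncomputable def gWW (ξ : ℝ) : ℝ := Real.sqrt (ξ * Real.tanh ξ)

open Topology

theorem Real.hasDerivAt_tanh (x : ℝ) : HasDerivAt tanh (cosh x ^ 2)⁻¹ x := by
  have h := (hasDerivAt_sinh x).div (hasDerivAt_cosh x) (cosh_pos x).ne'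
  rw [show sinh / cosh = tanh from funext fun y => (tanh_eq_sinh_div_cosh y).symm] at h
  refine h.congr_deriv ?_
  simp only [← sq, cosh_sq_sub_sinh_sq, one_div]

theorem Real.tanh_pos {x : ℝ} (hx : 0 < x) : 0 < tanh x := by
  rw [tanh_eq_sinh_div_cosh]
  exact div_pos (sinh_pos_iff.mpr hx) (cosh_pos x)

theorem Real.tanh_eq_one_sub_two_div (x : ℝ) : tanh x = 1 - 2 / (exp x ^ 2 + 1) := by
  rw [tanh_eq_sinh_div_cosh, sinh_eq, cosh_eq, exp_neg]
  field_simp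
  ring

theorem Real.tendsto_tanh_atTop : Tendsto tanh atTop (𝓝 1) := by
  have hden : Tendsto (fun x => exp x ^ 2 + 1) atTop atTop :=
    tendsto_atTop_add_const_right _ _ ((tendsto_pow_atTop two_ne_zero).comp tendsto_exp_atTop)
  have h := (tendsto_const_nhds (x := (1 : ℝ))).sub (hden.inv_tendsto_atTop.const_mul 2)
  rw [mul_zero, sub_zero] at h
  simpa [← div_eq_mul_inv, ← tanh_eq_one_sub_two_div] using h

theorem tendsto_pow_div_cosh_sq_atTop (n : ℕ) :
    Tendsto (fun x => x ^ n / cosh x ^ 2) atTop (𝓝 0) := by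
  have hbound : ∀ x ≥ (0 : ℝ), x ^ n / cosh x ^ 2 ≤ 2 * (x ^ n * exp (-x)) := by
    intro x hx
    have hcosh : exp x / 2 ≤ cosh x ^ 2 := by
      nlinarith [one_le_cosh x, exp_pos (-x), cosh_eq x]
    calc x ^ n / cosh x ^ 2 ≤ x ^ n / (exp x / 2) := by gcongr
      _ = 2 * (x ^ n * exp (-x)) := by rw [exp_neg]; field_simp
  have := (tendsto_pow_mul_exp_neg_atTop_nhds_zero n).const_mul 2
  rw [mul_zero] at this
  refine squeeze_zero' ?_ ?_ this
  · filter_upwards [eventually_ge_atTop 0] with x hx using by positivity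
  · filter_upwards [eventually_ge_atTop 0] with x hx using hbound x hx

theorem hasDerivAt_deriv_sqrt {u u' : ℝ → ℝ} {u'' x : ℝ}
    (hu : ∀ᶠ y in 𝓝 x, HasDerivAt u (u' y) y) (hu' : HasDerivAt u' u'' x) (hx : 0 < u x) :
    HasDerivAt (deriv fun y => √(u y))
      (u'' / (2 * √(u x)) - u' x ^ 2 / (4 * u x * √(u x))) x := by
  have hpos : ∀ᶠ y in 𝓝 x, 0 < u y :=
    hu.self_of_nhds.continuousAt.eventually (lt_mem_nhds hx)
  have hderiv : (deriv fun y => √(u y)) =ᶠ[𝓝 x] fun y => u' y / (2 * √(u y)) := by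
    filter_upwards [hu, hpos] with y hy hy₀ using (hy.sqrt hy₀.ne').deriv
  have hsqrt : 0 < √(u x) := sqrt_pos.mpr hx
  refine ((hu'.div ((hu.self_of_nhds.sqrt hx.ne').const_mul 2) (by positivity)).congr_deriv
    ?_).congr_of_eventuallyEq hderiv
  field_simp
  rw [sq_sqrt hx.le]
  ring

theorem hasDerivAt_mul_tanh (x : ℝ) :
    HasDerivAt (fun y => y * tanh y) (tanh x + x / cosh x ^ 2) x :=
  ((hasDerivAt_id' x).mul (hasDerivAt_tanh x)).congr_deriv (by ring)

theorem hasDerivAt_tanh_add_div_cosh_sq (x : ℝ) :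
    HasDerivAt (fun y => tanh y + y / cosh y ^ 2) (2 * (1 - x * tanh x) / cosh x ^ 2) x := by
  have hc := (cosh_pos x).ne'
  refine ((hasDerivAt_tanh x).add
    ((hasDerivAt_id x).div ((hasDerivAt_cosh x).pow 2) (pow_ne_zero 2 hc))).congr_deriv ?_
  simp only [Pi.pow_apply, id, tanh_eq_sinh_div_cosh]
  field_simp
  ring

noncomputable def gWWSecondDeriv (x : ℝ) : ℝ :=
  2 * (1 - x * tanh x) / cosh x ^ 2 / (2 * √(x * tanh x)) -
    (tanh x + x / cosh x ^ 2) ^ 2 / (4 * (x * tanh x) * √(x * tanh x))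

theorem hasDerivAt_deriv_gWW {x : ℝ} (hx : 0 < x) :
    HasDerivAt (deriv gWW) (gWWSecondDeriv x) x :=
  hasDerivAt_deriv_sqrt (u := fun y => y * tanh y) (.of_forall hasDerivAt_mul_tanh)
    (hasDerivAt_tanh_add_div_cosh_sq x) (mul_pos hx (tanh_pos hx))

theorem rpow_three_halves_mul_sqrt_second_deriv {x t : ℝ} (hx : 0 < x) (ht : 0 < t) (a b : ℝ) :
    x ^ (3 / 2 : ℝ) * (a / (2 * √(x * t)) - b ^ 2 / (4 * (x * t) * √(x * t))) =
      x * a / (2 * √t) - b ^ 2 / (4 * (t * √t)) := by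
  have hx' : x ^ (3 / 2 : ℝ) = x * √x := by
    rw [show (3 / 2 : ℝ) = 1 + 1 / 2 by norm_num, rpow_add hx, rpow_one, ← sqrt_eq_rpow]
  have hsx := sqrt_pos.mpr hx
  have hst := sqrt_pos.mpr ht
  rw [hx', sqrt_mul hx.le]
  field_simp

theorem tendsto_rpow_three_halves_mul_gWWSecondDeriv :
    Tendsto (fun x => x ^ (3 / 2 : ℝ) * gWWSecondDeriv x) atTop (𝓝 (-(1 : ℝ) / 4)) := by
  have hx₁ := tendsto_pow_div_cosh_sq_atTop 1
  have hx₂ := tendsto_pow_div_cosh_sq_atTop 2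
  simp only [pow_one] at hx₁
  have ha : Tendsto (fun x => x * (2 * (1 - x * tanh x) / cosh x ^ 2)) atTop (𝓝 0) := by
    have := ((hx₁.sub (hx₂.mul tendsto_tanh_atTop)).const_mul 2)
    rw [zero_mul, sub_zero, mul_zero] at this
    refine this.congr fun x => ?_
    ring
  have hb : Tendsto (fun x => tanh x + x / cosh x ^ 2) atTop (𝓝 1) := by
    simpa using tendsto_tanh_atTop.add hx₁
  have hs : Tendsto (fun x => √(tanh x)) atTop (𝓝 1) := by
    simpa using tendsto_tanh_atTop.sqrt
  have hlim := (ha.div (hs.const_mul 2) (by norm_num)).sub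
    ((hb.pow 2).div ((tendsto_tanh_atTop.mul hs).const_mul 4) (by norm_num))
  rw [show (0 : ℝ) / (2 * 1) - 1 ^ 2 / (4 * (1 * 1)) = -1 / 4 by norm_num] at hlim
  refine hlim.congr' ?_
  filter_upwards [eventually_gt_atTop 0] with x hx
  simp only [Pi.div_apply]
  exact (rpow_three_halves_mul_sqrt_second_deriv hx (tanh_pos hx) _ _).symm

/-- Asymptotics of `g''` at infinity: `g` is twice differentiable on `(0,∞)` and
`ξ^{3/2} g''(ξ) → −1/4` as `ξ → +∞`; in particular `|g''(ξ)| ~ (1/4) ξ^{−3/2}`. -/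
theorem g_second_deriv_asymptotics_at_infinity :
    (∀ ξ : ℝ, 0 < ξ → DifferentiableAt ℝ gWW ξ) ∧
    (∀ ξ : ℝ, 0 < ξ → DifferentiableAt ℝ (deriv gWW) ξ) ∧
    Filter.Tendsto (fun ξ : ℝ => ξ ^ ((3:ℝ)/2) * iteratedDeriv 2 gWW ξ)
      Filter.atTop (nhds (-(1:ℝ)/4)) := by
  refine ⟨fun ξ hξ => ?_, fun ξ hξ => (hasDerivAt_deriv_gWW hξ).differentiableAt, ?_⟩
  · exact ((hasDerivAt_mul_tanh ξ).sqrt (mul_pos hξ (tanh_pos hξ)).ne').differentiableAt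
  · refine tendsto_rpow_three_halves_mul_gWWSecondDeriv.congr' ?_
    filter_upwards [eventually_gt_atTop 0] with ξ hξ
    rw [iteratedDeriv_succ, iteratedDeriv_one, (hasDerivAt_deriv_gWW hξ).deriv]
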